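/- The category Dynam of dynamical systems has no initial object. -/

import Mathlib

open CategoryTheory

open scoped Classical

/-- The pushforward of a function `ψ : S → ℝ` along `f : S → S'`. -/
noncomputable def pushforward {S S' : Type} [Fintype S] (f : S → S') (ψ : S → ℝ) : S' → ℝ :=
  fun s' => ∑ s : S, if f s = s' then ψ s else 0

/-- The pullback of a function `ψ : S' → ℝ` along `f : S → S'`. -/
def pullback {S S' : Type} (f : S → S') (ψ : S' → ℝ) : S → ℝ := ψ ∘ f

theorem pushforward_id {S : Type} [Fintype S] :
    pushforward (id : S → S) = fun ψ => ψ := by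
  funext ψ s
  simp [pushforward]

theorem pushforward_comp {S T U : Type} [Fintype S] [Fintype T]
    (f : S → T) (g : T → U) (ψ : S → ℝ) :
    pushforward g (pushforward f ψ) = pushforward (g ∘ f) ψ := by
  funext u
  simp only [pushforward, Function.comp_apply]
  have h1 : ∀ t : T, (if g t = u then ∑ s : S, (if f s = t then ψ s else 0) else 0)
      = ∑ s : S, (if f s = t ∧ g t = u then ψ s else 0) := by
    intro t
    by_cases h : g t = u
    · simp only [h, if_true, and_true]
    · simp [h]
  rw [Finset.sum_congr rfl fun t _ => h1 t, Finset.sum_comm]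
  refine Finset.sum_congr rfl fun s _ => ?_
  rw [Finset.sum_eq_single (f s)]
  · simp
  · intro t _ ht
    simp [Ne.symm ht]
  · simp

/-- A dynamical system: a finite set `S` of variables together with a smooth vector
field on `ℝ^S`. -/
structure DynSys where
  S : Type
  [finS : Fintype S]
  v : (S → ℝ) → (S → ℝ)
  smooth : ContDiff ℝ (⊤ : ℕ∞) v

attribute [instance] DynSys.finS

/-- A morphism of dynamical systems: a function `f` on the variables with
`f_* ∘ v ∘ f^* = v'`. -/
@[ext]
structure DynHom (A B : DynSys) where
  f : A.S → B.S
  compat : pushforward f ∘ A.v ∘ pullback f = B.v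

/-- The category `Dynam` of dynamical systems. -/
instance : Category DynSys where
  Hom := DynHom
  id A := ⟨id, by rw [pushforward_id]; rfl⟩
  comp {A B C} φ φ' := ⟨φ'.f ∘ φ.f, by
    rw [← φ'.compat, ← φ.compat]
    funext x
    show pushforward (φ'.f ∘ φ.f) (A.v (pullback (φ'.f ∘ φ.f) x)) = _
    rw [← pushforward_comp]
    rfl⟩
  id_comp φ := DynHom.ext rfl
  comp_id φ := DynHom.ext rfl
  assoc φ φ' φ'' := DynHom.ext rfl

/-- The category of dynamical systems has no initial object. -/
theorem Dynam_no_initial : ¬ Limits.HasInitial DynSys := by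
  intro h
  -- For each real c, a dynamical system on PUnit with constant field c
  let sys : ℝ → DynSys := fun c => ⟨PUnit, fun _ _ => c, contDiff_const⟩
  let I : DynSys := Limits.initial DynSys
  let φ : (c : ℝ) → (I ⟶ sys c) := fun c => Limits.initial.to (sys c)
  have hf : ∀ c, (φ c).f = fun _ => PUnit.unit := by
    intro c; funext s; rfl
  have key : ∀ c : ℝ, (∑ s : I.S, I.v (fun _ => (0 : ℝ)) s) = c := by
    intro c
    have := (φ c).compat
    have h2 := congrFun (congrFun this (fun _ => (0 : ℝ))) PUnit.unit
    simp only [Function.comp_apply, pushforward, pullback, hf] at h2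
    convert h2 using 3
    rw [if_pos trivial]; rfl
  have h01 := (key 0).symm.trans (key 1)
  norm_num at h01
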